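/- The piecewise linear reconstruction with the generalized minmod limiter is second-order accurate at cell interfaces: if u is C² and slopes are given by s_j = minmod(θ(u(x_j) − u(x_{j−1}))/Δx, (u(x_{j+1}) − u(x_{j−1}))/(2Δx), θ(u(x_{j+1}) − u(x_j))/Δx) with θ ∈ [1,2], then at any point where u' ≠ 0 the reconstructed interface value u(x_j) + (Δx/2)s_j differs from u(x_{j+1/2}) by O(Δx²) as Δx → 0. -/
import Mathlib


open Filter

noncomputable def minmod3 (a b c : ℝ) : ℝ :=
  if 0 < a ∧ 0 < b ∧ 0 < c then min a (min b c)
  else if a < 0 ∧ b < 0 ∧ c < 0 then max a (max b c)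
  else 0

theorem minmod_reconstruction_second_order (u : ℝ → ℝ) (hu : ContDiff ℝ 2 u)
    (θ : ℝ) (hθ : θ ∈ Set.Icc (1 : ℝ) 2) (x₀ : ℝ) (hderiv : deriv u x₀ ≠ 0) :
    (fun h : ℝ =>
        u x₀ + h / 2 *
          minmod3 (θ * (u x₀ - u (x₀ - h)) / h)
            ((u (x₀ + h) - u (x₀ - h)) / (2 * h))
            (θ * (u (x₀ + h) - u x₀) / h)
        - u (x₀ + h / 2)) =O[nhdsWithin 0 (Set.Ioi 0)] fun h : ℝ => h ^ 2 := by
  obtain ⟨hθ1, hθ2⟩ := hθ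
  set L := deriv u x₀ with hLdef
  have hdiff : Differentiable ℝ u := hu.differentiable (by norm_num)
  have hcd : ContDiff ℝ 1 (deriv u) := by
    have h2 : ContDiff ℝ ((1 : WithTop ℕ∞) + 1) u := by
      have : ((2 : ℕ) : WithTop ℕ∞) = (1 : WithTop ℕ∞) + 1 := by norm_num
      rw [← this]; exact_mod_cast hu
    exact (contDiff_succ_iff_deriv.mp h2).2.2
  obtain ⟨K, t, ht, hK⟩ := hcd.contDiffAt.exists_lipschitzOnWith (x := x₀)
  obtain ⟨ε, hε, hball⟩ := Metric.mem_nhds_iff.mp ht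
  have hx₀t : x₀ ∈ t := hball (Metric.mem_ball_self hε)
  -- slope estimate
  have slope_bound : ∀ h : ℝ, 0 < h → h < ε / 2 → ∀ a b : ℝ, a < b →
      |a - x₀| ≤ h → |b - x₀| ≤ h → |(u b - u a) / (b - a) - L| ≤ K * h := by
    intro h hh hhe a b hab ha hb
    obtain ⟨c, hc, hceq⟩ := exists_deriv_eq_slope u hab hdiff.continuous.continuousOn
      (hdiff.differentiableOn)
    have hcx : |c - x₀| ≤ h := by
      rw [abs_le] at ha hb ⊢
      constructor <;> nlinarith [hc.1, hc.2]
    have hct : c ∈ t := by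
      apply hball
      rw [Metric.mem_ball, Real.dist_eq]
      linarith [abs_nonneg (c - x₀)]
    have := hK.dist_le_mul c hct x₀ hx₀t
    rw [Real.dist_eq, Real.dist_eq] at this
    calc |(u b - u a) / (b - a) - L| = |deriv u c - deriv u x₀| := by rw [hceq]
      _ ≤ K * |c - x₀| := this
      _ ≤ K * h := by
          exact mul_le_mul_of_nonneg_left hcx (K.coe_nonneg)
  rw [Asymptotics.isBigO_iff]
  refine ⟨2 * K, ?_⟩
  have hLne : L ≠ 0 := hderiv
  set δ₀ : ℝ := min (ε / 2) (|L| / ((K : ℝ) + 1)) with hδ₀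
  have hKpos : (0 : ℝ) < (K : ℝ) + 1 := by positivity
  have hδ₀pos : 0 < δ₀ := by
    apply lt_min (by linarith)
    exact div_pos (abs_pos.mpr hLne) hKpos
  filter_upwards [Ioo_mem_nhdsGT hδ₀pos] with h hh
  obtain ⟨hh0, hhδ⟩ := hh
  have hhe : h < ε / 2 := lt_of_lt_of_le hhδ (min_le_left _ _)
  have hKh : (K : ℝ) * h < |L| := by
    have h1 : h < |L| / ((K : ℝ) + 1) := lt_of_lt_of_le hhδ (min_le_right _ _)
    have h2 : h * ((K : ℝ) + 1) < |L| := (lt_div_iff₀ hKpos).mp h1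
    nlinarith [K.coe_nonneg]
  -- the three slopes
  set S₁ : ℝ := (u x₀ - u (x₀ - h)) / h with hS₁def
  set S₂ : ℝ := (u (x₀ + h) - u (x₀ - h)) / (2 * h) with hS₂def
  set S₃ : ℝ := (u (x₀ + h) - u x₀) / h with hS₃def
  set S₀ : ℝ := (u (x₀ + h / 2) - u x₀) / (h / 2) with hS₀def
  have hb1 : |S₁ - L| ≤ K * h := by
    have := slope_bound h hh0 hhe (x₀ - h) x₀ (by linarith)
      (by rw [show x₀ - h - x₀ = -h by ring, abs_neg, abs_of_pos hh0])
      (by simpa using hh0.le)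
    simpa [hS₁def, show x₀ - (x₀ - h) = h by ring] using this
  have hb2 : |S₂ - L| ≤ K * h := by
    have := slope_bound h hh0 hhe (x₀ - h) (x₀ + h) (by linarith)
      (by rw [show x₀ - h - x₀ = -h by ring, abs_neg, abs_of_pos hh0])
      (by rw [show x₀ + h - x₀ = h by ring, abs_of_pos hh0])
    simpa [hS₂def, show x₀ + h - (x₀ - h) = 2 * h by ring] using this
  have hb3 : |S₃ - L| ≤ K * h := by
    have := slope_bound h hh0 hhe x₀ (x₀ + h) (by linarith)
      (by simpa using hh0.le)
      (by rw [show x₀ + h - x₀ = h by ring, abs_of_pos hh0])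
    simpa [hS₃def] using this
  have hb0 : |S₀ - L| ≤ K * h := by
    have := slope_bound h hh0 hhe x₀ (x₀ + h / 2) (by linarith)
      (by simpa using hh0.le)
      (by rw [show x₀ + h / 2 - x₀ = h / 2 by ring, abs_of_pos (by linarith)]; linarith)
    simpa [hS₀def] using this
  have harg1 : θ * (u x₀ - u (x₀ - h)) / h = θ * S₁ := by
    rw [hS₁def]; ring
  have harg3 : θ * (u (x₀ + h) - u x₀) / h = θ * S₃ := by
    rw [hS₃def]; ring
  set m : ℝ := minmod3 (θ * S₁) S₂ (θ * S₃) with hmdef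
  have hu2 : u (x₀ + h / 2) = u x₀ + h / 2 * S₀ := by
    rw [hS₀def]; field_simp; ring
  have key : u x₀ + h / 2 * m - u (x₀ + h / 2) = h / 2 * (m - S₀) := by
    rw [hu2]; ring
  rw [harg1, harg3, ← hmdef, Real.norm_eq_abs, Real.norm_eq_abs, key, abs_mul,
    abs_of_pos (by linarith : (0:ℝ) < h / 2)]
  clear_value S₁ S₂ S₃ S₀
  clear hS₁def hS₂def hS₃def hS₀def hu2 key harg1 harg3 slope_bound hK hball hx₀t ht
    hdiff hcd hu hδ₀pos hhδ hhe hδ₀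
  -- bound on the minmod value
  have hm : |m - L| ≤ K * h := by
    rw [hmdef]
    rcases lt_or_gt_of_ne hLne with hLneg | hLpos
    · -- L < 0
      have habsL : |L| = -L := abs_of_neg hLneg
      rw [habsL] at hKh
      rw [abs_le] at hb1 hb2 hb3
      have h1 : S₁ < 0 := by linarith
      have h2 : S₂ < 0 := by linarith
      have h3 : S₃ < 0 := by linarith
      have hθ1' : θ * S₁ < 0 := mul_neg_of_pos_of_neg (by linarith) h1
      have hθ3' : θ * S₃ < 0 := mul_neg_of_pos_of_neg (by linarith) h3
      rw [minmod3, if_neg (by push_neg; intro hc; linarith), if_pos ⟨hθ1', h2, hθ3'⟩]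
      rw [abs_le]
      have e1 : θ * S₁ ≤ S₁ := by nlinarith
      have e3 : θ * S₃ ≤ S₃ := by nlinarith
      constructor
      · have : S₂ ≤ max (θ * S₁) (max S₂ (θ * S₃)) := le_max_of_le_right (le_max_left _ _)
        linarith
      · have : max (θ * S₁) (max S₂ (θ * S₃)) ≤ L + K * h :=
          max_le (by linarith) (max_le (by linarith) (by linarith))
        linarith
    · -- L > 0
      have habsL : |L| = L := abs_of_pos hLpos
      rw [habsL] at hKh
      rw [abs_le] at hb1 hb2 hb3
      have h1 : 0 < S₁ := by linarith
      have h2 : 0 < S₂ := by linarith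
      have h3 : 0 < S₃ := by linarith
      have hθ1' : 0 < θ * S₁ := mul_pos (by linarith) h1
      have hθ3' : 0 < θ * S₃ := mul_pos (by linarith) h3
      rw [minmod3, if_pos ⟨hθ1', h2, hθ3'⟩]
      rw [abs_le]
      have e1 : S₁ ≤ θ * S₁ := by nlinarith
      have e3 : S₃ ≤ θ * S₃ := by nlinarith
      constructor
      · have : L - K * h ≤ min (θ * S₁) (min S₂ (θ * S₃)) :=
          le_min (by linarith) (le_min (by linarith) (by linarith))
        linarith
      · have : min (θ * S₁) (min S₂ (θ * S₃)) ≤ S₂ :=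
          le_trans (min_le_right _ _) (min_le_left _ _)
        linarith
  clear_value m
  have hmS : |m - S₀| ≤ 2 * (K * h) := by
    calc |m - S₀| = |(m - L) + (L - S₀)| := by ring_nf
      _ ≤ |m - L| + |L - S₀| := abs_add_le _ _
      _ ≤ K * h + K * h := add_le_add hm (by rw [abs_sub_comm]; exact hb0)
      _ = 2 * (K * h) := by ring
  calc h / 2 * |m - S₀| ≤ h / 2 * (2 * (K * h)) :=
        mul_le_mul_of_nonneg_left hmS (by linarith)
    _ = 2 * K * (h * h) / 2 := by ring
    _ ≤ 2 * K * |h ^ 2| := by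
        rw [abs_of_nonneg (by positivity : (0:ℝ) ≤ h ^ 2)]
        nlinarith [K.coe_nonneg]
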